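/- The coinductive tree subtyping relation ≤_T is a preorder: it is reflexive and transitive. -/

import Mathlib

namespace CAP

/-- μ-types: variables, constants, compounds D @ A, functions A ⊃ B, unions A ⊕ B, recursive μV.A -/
inductive MuTy : Type
  | tvar : ℕ → MuTy
  | tconst : ℕ → MuTy
  | comp : MuTy → MuTy → MuTy
  | arr : MuTy → MuTy → MuTy
  | union : MuTy → MuTy → MuTy
  | mu : ℕ → MuTy → MuTy
  deriving DecidableEq

namespace MuTy

/-- substitution of `B` for variable `V` -/
def subst (V : ℕ) (B : MuTy) : MuTy → MuTy
  | tvar n => if n = V then B else tvar n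
  | tconst c => tconst c
  | comp A₁ A₂ => comp (subst V B A₁) (subst V B A₂)
  | arr A₁ A₂ => arr (subst V B A₁) (subst V B A₂)
  | union A₁ A₂ => union (subst V B A₁) (subst V B A₂)
  | mu W A => if W = V then mu W A else mu W (subst V B A)

/-- `V` occurs in the type only under `comp` or `arr` (if at all) -/
def Guarded (V : ℕ) : MuTy → Prop
  | tvar n => n ≠ V
  | tconst _ => True
  | comp _ _ => True
  | arr _ _ => True
  | union A₁ A₂ => Guarded V A₁ ∧ Guarded V A₂
  | mu W A => W = V ∨ Guarded V A

/-- contractive μ-types -/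
def Contractive : MuTy → Prop
  | tvar _ => True
  | tconst _ => True
  | comp A₁ A₂ => Contractive A₁ ∧ Contractive A₂
  | arr A₁ A₂ => Contractive A₁ ∧ Contractive A₂
  | union A₁ A₂ => Contractive A₁ ∧ Contractive A₂
  | mu V A => Guarded V A ∧ Contractive A

/-- free variables -/
def fv : MuTy → Set ℕ
  | tvar n => {n}
  | tconst _ => ∅
  | comp A₁ A₂ => fv A₁ ∪ fv A₂
  | arr A₁ A₂ => fv A₁ ∪ fv A₂
  | union A₁ A₂ => fv A₁ ∪ fv A₂
  | mu V A => fv A \ {V}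

/-- number of consecutive μ binders at the root -/
def headMu : MuTy → ℕ
  | mu _ A => headMu A + 1
  | _ => 0

end MuTy

/-- inductive μ-type equivalence ≈ -/
inductive MuEq : MuTy → MuTy → Prop
  | refl (A) : MuEq A A
  | trans : MuEq A B → MuEq B C → MuEq A C
  | symm : MuEq A B → MuEq B A
  | arrCong : MuEq A A' → MuEq B B' → MuEq (.arr A B) (.arr A' B')
  | compCong : MuEq D D' → MuEq A A' → MuEq (.comp D A) (.comp D' A')
  | unionIdem (A) : MuEq (.union A A) A
  | unionComm (A B) : MuEq (.union A B) (.union B A)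
  | unionAssoc (A B C) : MuEq (.union A (.union B C)) (.union (.union A B) C)
  | unionCong : MuEq A A' → MuEq B B' → MuEq (.union A B) (.union A' B')
  | muCong : MuEq A B → MuEq (.mu V A) (.mu V B)
  | fold (V A) : MuEq (.mu V A) (MuTy.subst V (.mu V A) A)
  | contr : MuEq A (MuTy.subst V A B) → (MuTy.mu V B).Contractive → MuEq A (.mu V B)

/-- inductive μ-type subtyping, with a context of variable assumptions -/
inductive MuLe : Set (ℕ × ℕ) → MuTy → MuTy → Prop
  | refl (S A) : MuLe S A A
  | hyp : (V, W) ∈ S → MuLe S (.tvar V) (.tvar W)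
  | eq : MuEq A B → MuLe S A B
  | trans : MuLe S A B → MuLe S B C → MuLe S A C
  | compCong : MuLe S D D' → MuLe S A A' → MuLe S (.comp D A) (.comp D' A')
  | func : MuLe S A' A → MuLe S B B' → MuLe S (.arr A B) (.arr A' B')
  | unionL : MuLe S A C → MuLe S B C → MuLe S (.union A B) C
  | unionR1 : MuLe S A B → MuLe S A (.union B C)
  | unionR2 : MuLe S A C → MuLe S A (.union B C)
  | recRule : MuLe (insert (V, W) S) A B → W ∉ A.fv → V ∉ B.fv →
      MuLe S (.mu V A) (.mu W B)

/-- binary association trees of unions, used to express n-fold unions with arbitrary association -/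
inductive UTree : Type
  | leaf : MuTy → UTree
  | node : UTree → UTree → UTree

def UTree.toTy : UTree → MuTy
  | .leaf A => A
  | .node l r => .union l.toTy r.toTy

def UTree.leaves : UTree → List MuTy
  | .leaf A => [A]
  | .node l r => l.leaves ++ r.leaves

/-! ## Infinite types as trees -/

inductive Atom : Type
  | var : ℕ → Atom
  | const : ℕ → Atom
  | bullet : Atom
  deriving DecidableEq

inductive Lab : Type
  | atom : Atom → Lab
  | comp : Lab
  | arr : Lab
  | union : Lab
  deriving DecidableEq

def Lab.IsBinary : Lab → Prop
  | .comp => True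
  | .arr => True
  | .union => True
  | .atom _ => False

/-- possibly infinite trees: partial labelling of positions -/
abbrev ITree : Type := List Bool → Option Lab

namespace ITree

def child (A : ITree) (b : Bool) : ITree := fun π => A (b :: π)

/-- well-formed infinite types: rooted, prefix-closed with binary branching,
and no infinite branch consisting solely of ⊕ -/
def Wf (A : ITree) : Prop :=
  (A []).isSome ∧
  (∀ π b, (A (π ++ [b])).isSome ↔ ∃ l, A π = some l ∧ l.IsBinary) ∧
  (∀ (π : List Bool) (f : ℕ → Bool), ∃ n, A (π ++ (List.range n).map f) ≠ some Lab.union)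

end ITree

/-- maximal union decomposition: the list of non-union components of a tree -/
inductive UnionComps : ITree → List ITree → Prop
  | nonUnion (A : ITree) : A [] ≠ some Lab.union → UnionComps A [A]
  | union (A : ITree) (l r : List ITree) :
      A [] = some Lab.union →
      UnionComps (A.child false) l → UnionComps (A.child true) r →
      UnionComps A (l ++ r)

/-- the rule functional for coinductive tree equivalence -/
def EqF (R : ITree → ITree → Prop) (A B : ITree) : Prop :=
  (∃ a : Atom, A [] = some (Lab.atom a) ∧ B [] = some (Lab.atom a)) ∨
  (A [] = some Lab.comp ∧ B [] = some Lab.comp ∧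
    R (A.child false) (B.child false) ∧ R (A.child true) (B.child true)) ∨
  (A [] = some Lab.arr ∧ B [] = some Lab.arr ∧
    R (A.child false) (B.child false) ∧ R (A.child true) (B.child true)) ∨
  (∃ (la lb : List ITree), UnionComps A la ∧ UnionComps B lb ∧
    2 < la.length + lb.length ∧
    (∃ f : Fin la.length → Fin lb.length, ∀ i, R (la.get i) (lb.get (f i))) ∧
    (∃ g : Fin lb.length → Fin la.length, ∀ j, R (la.get (g j)) (lb.get j)))

/-- coinductive tree equivalence ≈_T : the greatest fixed point of `EqF` -/
def TreeEq (A B : ITree) : Prop :=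
  ∃ R : ITree → ITree → Prop, (∀ X Y, R X Y → EqF R X Y) ∧ R A B

/-- the rule functional for coinductive tree subtyping -/
def LeF (R : ITree → ITree → Prop) (A B : ITree) : Prop :=
  (∃ a : Atom, A [] = some (Lab.atom a) ∧ B [] = some (Lab.atom a)) ∨
  (A [] = some Lab.comp ∧ B [] = some Lab.comp ∧
    R (A.child false) (B.child false) ∧ R (A.child true) (B.child true)) ∨
  (A [] = some Lab.arr ∧ B [] = some Lab.arr ∧
    R (B.child false) (A.child false) ∧ R (A.child true) (B.child true)) ∨
  (∃ (la lb : List ITree), UnionComps A la ∧ UnionComps B lb ∧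
    2 < la.length + lb.length ∧
    (∃ f : Fin la.length → Fin lb.length, ∀ i, R (la.get i) (lb.get (f i))))

/-- coinductive tree subtyping ≤_T : the greatest fixed point of `LeF` -/
def TreeLe (A B : ITree) : Prop :=
  ∃ R : ITree → ITree → Prop, (∀ X Y, R X Y → LeF R X Y) ∧ R A B

open Classical in
/-- tree substitution of tree `B` for the variable `V` -/
noncomputable def substT (V : ℕ) (B A : ITree) : ITree := fun π =>
  if h : ∃ ps : List Bool × List Bool,
      π = ps.1 ++ ps.2 ∧ A ps.1 = some (Lab.atom (Atom.var V))
  then B (Classical.choose h).2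
  else A π

/-- the single-node tree consisting of an atom -/
def atomTree (a : Atom) : ITree := fun π => if π = [] then some (Lab.atom a) else none

/-- a tree with binary root label `l` and subtrees `A₁`, `A₂` -/
def binTree (l : Lab) (A₁ A₂ : ITree) : ITree := fun π =>
  match π with
  | [] => some l
  | false :: π' => A₁ π'
  | true :: π' => A₂ π'

/-- effective depth of a position: union nodes do not consume depth -/
def edepth (A : ITree) : List Bool → ℕ
  | [] => 0
  | b :: π => (if A [] = some Lab.union then 0 else 1) + edepth (A.child b) π

open Classical in
/-- truncation of a tree at depth `k`; cut points are replaced by the constant • -/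
noncomputable def cut (k : ℕ) (A : ITree) : ITree := fun π =>
  if ∀ p, p <+: π → p ≠ π → edepth A p < k then
    (if edepth A π < k then A π
     else if (A π).isSome then some (Lab.atom Atom.bullet) else none)
  else none

/-- labels of the tree interpretation of a μ-type (μ is unfolded completely) -/
inductive HasLab : MuTy → List Bool → Lab → Prop
  | tvar (n) : HasLab (.tvar n) [] (.atom (.var n))
  | tconst (c) : HasLab (.tconst c) [] (.atom (.const c))
  | compRoot (A B) : HasLab (.comp A B) [] .comp
  | compL : HasLab A π l → HasLab (.comp A B) (false :: π) l
  | compR : HasLab B π l → HasLab (.comp A B) (true :: π) l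
  | arrRoot (A B) : HasLab (.arr A B) [] .arr
  | arrL : HasLab A π l → HasLab (.arr A B) (false :: π) l
  | arrR : HasLab B π l → HasLab (.arr A B) (true :: π) l
  | unionRoot (A B) : HasLab (.union A B) [] .union
  | unionL : HasLab A π l → HasLab (.union A B) (false :: π) l
  | unionR : HasLab B π l → HasLab (.union A B) (true :: π) l
  | mu : HasLab (MuTy.subst V (.mu V A) A) π l → HasLab (.mu V A) π l

open Classical in
/-- the tree interpretation ⟦·⟧ of μ-types -/
noncomputable def interp (A : MuTy) : ITree := fun π =>
  if h : ∃ l, HasLab A π l then some (Classical.choose h) else none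

/-- application of a parallel substitution to a μ-type -/
def applyS (σ : ℕ → MuTy) : MuTy → MuTy
  | .tvar n => σ n
  | .tconst c => .tconst c
  | .comp A B => .comp (applyS σ A) (applyS σ B)
  | .arr A B => .arr (applyS σ A) (applyS σ B)
  | .union A B => .union (applyS σ A) (applyS σ B)
  | .mu V A => .mu V (applyS (Function.update σ V (.tvar V)) A)

/-- outermost type constructor (head μ binders are unfolded/skipped) -/
inductive HeadC : Type
  | hvar : ℕ → HeadC
  | hconst : ℕ → HeadC
  | hcomp : HeadC
  | harr : HeadC
  | hunion : HeadC
  deriving DecidableEq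

def headOf : MuTy → HeadC
  | .tvar n => .hvar n
  | .tconst c => .hconst c
  | .comp _ _ => .hcomp
  | .arr _ _ => .harr
  | .union _ _ => .hunion
  | .mu _ A => headOf A

/-- non-union μ-types: after unfolding head μ binders the top constructor is not ⊕ -/
def NonUnion : MuTy → Prop
  | .union _ _ => False
  | .mu _ A => NonUnion A
  | _ => True

/-- union contexts U ::= □ | U ⊕ A | A ⊕ U -/
inductive UCtx : Type
  | hole : UCtx
  | left : UCtx → MuTy → UCtx
  | right : MuTy → UCtx → UCtx

def UCtx.fill : UCtx → MuTy → MuTy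
  | .hole, A => A
  | .left U B, A => .union (U.fill A) B
  | .right B U, A => .union B (U.fill A)

end CAP

namespace CAP

/-! Reflexivity: the diagonal of well-formed trees is a post-fixed point of `LeF`. At a ⊕-root the
union rule applies to the maximal union decomposition, which exists because a well-formed tree has
no infinite ⊕-chain.

Transitivity: the composite `≤_T ∘ ≤_T` is a post-fixed point of `LeF`. Given `X ≤_T Y ≤_T Z`, both
steps yield maps between the union components (of `Y` the same ones, as the decomposition is
unique), and composing them gives the union rule for `X` and `Z`, unless both of these are single
non-union components; then the component of `Y` they are compared with is non-union as well, and
the two steps use the same structural rule, which composes. -/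

lemma LeF.mono {R S : ITree → ITree → Prop} (h : ∀ X Y, R X Y → S X Y) {A B : ITree}
    (hAB : LeF R A B) : LeF S A B := by
  rcases hAB with hatom | ⟨hA, hB, h₁, h₂⟩ | ⟨hA, hB, h₁, h₂⟩ | ⟨la, lb, hla, hlb, hlen, f, hf⟩
  · exact Or.inl hatom
  · exact Or.inr (Or.inl ⟨hA, hB, h _ _ h₁, h _ _ h₂⟩)
  · exact Or.inr (Or.inr (Or.inl ⟨hA, hB, h _ _ h₁, h _ _ h₂⟩))
  · exact Or.inr (Or.inr (Or.inr ⟨la, lb, hla, hlb, hlen, f, fun i => h _ _ (hf i)⟩))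

lemma TreeLe.unfold {A B : ITree} (h : TreeLe A B) : LeF TreeLe A B := by
  obtain ⟨R, hR, hAB⟩ := h
  exact (hR _ _ hAB).mono fun X Y hXY => ⟨R, hR, hXY⟩

namespace UnionComps

variable {A : ITree} {l : List ITree}

lemma length_pos (h : UnionComps A l) : 0 < l.length := by
  induction h with
  | nonUnion => simp
  | union _ _ _ _ _ _ ihl => simp only [List.length_append]; omega

lemma eq_singleton (h : UnionComps A l) (hA : A [] ≠ some Lab.union) : l = [A] := by
  cases h with
  | nonUnion => rfl
  | union _ _ _ hroot => exact absurd hroot hA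

lemma two_le_length (h : UnionComps A l) (hA : A [] = some Lab.union) : 2 ≤ l.length := by
  cases h with
  | nonUnion _ hA' => exact absurd hA hA'
  | union _ _ _ _ hl hr =>
    have := hl.length_pos
    have := hr.length_pos
    simp only [List.length_append]; omega

lemma unique (h : UnionComps A l) {l' : List ITree} (h' : UnionComps A l') : l = l' := by
  induction h generalizing l' with
  | nonUnion _ hA => exact (h'.eq_singleton hA).symm
  | union _ _ _ hroot _ _ ihl ihr =>
    cases h' with
    | nonUnion _ hA => exact absurd hroot hA
    | union _ _ _ _ hl' hr' => rw [ihl hl', ihr hr']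

lemma root_ne_union_of_mem (h : UnionComps A l) {T : ITree} (hT : T ∈ l) :
    T [] ≠ some Lab.union := by
  induction h with
  | nonUnion _ hA => rwa [List.mem_singleton.1 hT]
  | union _ _ _ _ _ _ ihl ihr => exact (List.mem_append.1 hT).elim ihl ihr

lemma length_add_le_two {B : ITree} {l' : List ITree} (h : UnionComps A l)
    (h' : UnionComps B l') (hA : A [] ≠ some Lab.union) (hB : B [] ≠ some Lab.union) :
    l.length + l'.length ≤ 2 := by
  simp [h.eq_singleton hA, h'.eq_singleton hB]

end UnionComps

lemma ITree.Wf.child {A : ITree} (hA : A.Wf) {l : Lab} (hroot : A [] = some l)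
    (hl : l.IsBinary) (b : Bool) : (A.child b).Wf := by
  obtain ⟨hsome, hbranch, hchain⟩ := hA
  refine ⟨?_, fun π b' => hbranch (b :: π) b', fun π f => hchain (b :: π) f⟩
  simpa [ITree.child] using (hbranch [] b).2 ⟨l, hroot, hl⟩

lemma exists_unionComps {A : ITree}
    (hA : ∀ f : ℕ → Bool, ∃ n, A ((List.range n).map f) ≠ some Lab.union) :
    ∃ l, UnionComps A l := by
  by_contra hbad
  have hstep : ∀ T : {T : ITree // ¬ ∃ l, UnionComps T l},
      T.1 [] = some Lab.union ∧ ∃ b, ¬ ∃ l, UnionComps (T.1.child b) l := by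
    rintro ⟨T, hT⟩
    have hroot : T [] = some Lab.union := by
      by_contra hT'
      exact hT ⟨[T], .nonUnion T hT'⟩
    refine ⟨hroot, ?_⟩
    by_contra! hchildren
    obtain ⟨lf, hlf⟩ := hchildren false
    obtain ⟨lt, hlt⟩ := hchildren true
    exact hT ⟨lf ++ lt, .union T lf lt hroot hlf hlt⟩
  choose hroot b hb using hstep
  let bad : ℕ → {T : ITree // ¬ ∃ l, UnionComps T l} :=
    fun n => Nat.rec ⟨A, hbad⟩ (fun _ T => ⟨T.1.child (b T), hb T⟩) n
  have hbad_eq : ∀ n π, (bad n).1 π = A ((List.range n).map (fun k => b (bad k)) ++ π) := by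
    intro n
    induction n with
    | zero => intro π; rfl
    | succ n ih =>
      intro π
      rw [show (bad (n + 1)).1 π = (bad n).1 (b (bad n) :: π) from rfl, ih]
      simp [List.range_succ]
  obtain ⟨n, hn⟩ := hA fun k => b (bad k)
  exact hn (by simpa [hbad_eq] using hroot (bad n))

lemma UnionComps.wf_of_mem {A : ITree} {l : List ITree} (h : UnionComps A l) (hA : A.Wf)
    {T : ITree} (hT : T ∈ l) : T.Wf := by
  induction h with
  | nonUnion => rwa [List.mem_singleton.1 hT]
  | union _ _ _ hroot _ _ ihl ihr =>
    exact (List.mem_append.1 hT).elim (ihl (hA.child hroot trivial false))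
      (ihr (hA.child hroot trivial true))

lemma TreeLe.refl {A : ITree} (hA : A.Wf) : TreeLe A A := by
  refine ⟨fun X Y => X = Y ∧ X.Wf, ?_, rfl, hA⟩
  rintro X _ ⟨rfl, hX⟩
  obtain ⟨l, hl⟩ := Option.isSome_iff_exists.1 hX.1
  cases l with
  | atom a => exact Or.inl ⟨a, hl, hl⟩
  | comp =>
    exact Or.inr (Or.inl ⟨hl, hl, ⟨rfl, hX.child hl trivial false⟩,
      ⟨rfl, hX.child hl trivial true⟩⟩)
  | arr =>
    exact Or.inr (Or.inr (Or.inl ⟨hl, hl, ⟨rfl, hX.child hl trivial false⟩,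
      ⟨rfl, hX.child hl trivial true⟩⟩))
  | union =>
    obtain ⟨la, hla⟩ := exists_unionComps fun f => by simpa using hX.2.2 [] f
    have := hla.two_le_length hl
    exact Or.inr (Or.inr (Or.inr ⟨la, la, hla, hla, by omega, id,
      fun i => ⟨rfl, hla.wf_of_mem hX (List.get_mem la i)⟩⟩))

lemma TreeLe.exists_unionComps {X Y : ITree} (h : TreeLe X Y) :
    ∃ la lb, UnionComps X la ∧ UnionComps Y lb ∧
      ∃ f : Fin la.length → Fin lb.length, ∀ i, TreeLe (la.get i) (lb.get (f i)) := by
  have singletons (hX : X [] ≠ some Lab.union) (hY : Y [] ≠ some Lab.union) :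
      ∃ la lb, UnionComps X la ∧ UnionComps Y lb ∧
        ∃ f : Fin la.length → Fin lb.length, ∀ i, TreeLe (la.get i) (lb.get (f i)) :=
    ⟨[X], [Y], .nonUnion X hX, .nonUnion Y hY, id, fun ⟨0, _⟩ => h⟩
  rcases h.unfold with ⟨a, hX, hY⟩ | ⟨hX, hY, -⟩ | ⟨hX, hY, -⟩ | ⟨la, lb, hla, hlb, -, hf⟩
  rotate_right
  · exact ⟨la, lb, hla, hlb, hf⟩
  all_goals exact singletons (by simp [hX]) (by simp [hY])

lemma LeF.relComp_of_root_ne_union {R : ITree → ITree → Prop} {X Y Z : ITree}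
    (hXY : LeF R X Y) (hYZ : LeF R Y Z) (hX : X [] ≠ some Lab.union)
    (hY : Y [] ≠ some Lab.union) (hZ : Z [] ≠ some Lab.union) :
    LeF (Relation.Comp R R) X Z := by
  rcases hXY with ⟨a, hXa, hYa⟩ | ⟨hXc, hYc, hx₁, hx₂⟩ | ⟨hXr, hYr, hx₁, hx₂⟩ |
      ⟨la, lb, hla, hlb, hlen, -⟩
  rotate_right
  · exact absurd (hla.length_add_le_two hlb hX hY) hlen.not_ge
  all_goals rcases hYZ with ⟨b, hYb, hZb⟩ | ⟨hYc', hZc, hy₁, hy₂⟩ | ⟨hYr', hZr, hy₁, hy₂⟩ |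
      ⟨lb, lc, hlb, hlc, hlen, -⟩
  any_goals exact absurd (hlb.length_add_le_two hlc hY hZ) hlen.not_ge
  -- in the remaining mixed cases `Y` would carry two different root labels
  any_goals (exfalso; simp_all; done)
  · obtain rfl : a = b := Lab.atom.inj (Option.some.inj (hYa.symm.trans hYb))
    exact Or.inl ⟨a, hXa, hZb⟩
  · exact Or.inr (Or.inl ⟨hXc, hZc, ⟨_, hx₁, hy₁⟩, ⟨_, hx₂, hy₂⟩⟩)
  · exact Or.inr (Or.inr (Or.inl ⟨hXr, hZr, ⟨_, hy₁, hx₁⟩, ⟨_, hx₂, hy₂⟩⟩))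

lemma leF_relComp_treeLe {X Z : ITree} (h : Relation.Comp TreeLe TreeLe X Z) :
    LeF (Relation.Comp TreeLe TreeLe) X Z := by
  obtain ⟨Y, hXY, hYZ⟩ := h
  obtain ⟨la, lb, hla, hlb, f, hf⟩ := hXY.exists_unionComps
  obtain ⟨lb', lc, hlb', hlc, g, hg⟩ := hYZ.exists_unionComps
  obtain rfl := hlb.unique hlb'
  by_cases hlen : 2 < la.length + lc.length
  · exact Or.inr (Or.inr (Or.inr ⟨la, lc, hla, hlc, hlen,
      g ∘ f, fun i => ⟨lb.get (f i), hf i, hg (f i)⟩⟩))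
  have hX : X [] ≠ some Lab.union := fun h => by
    have := hla.two_le_length h
    have := hlc.length_pos
    omega
  have hZ : Z [] ≠ some Lab.union := fun h => by
    have := hlc.two_le_length h
    have := hla.length_pos
    omega
  obtain rfl := hla.eq_singleton hX
  obtain rfl := hlc.eq_singleton hZ
  let i : Fin 1 := 0
  have hY : (lb.get (f i)) [] ≠ some Lab.union := hlb.root_ne_union_of_mem (List.get_mem _ _)
  have hXY : TreeLe X (lb.get (f i)) := hf i
  have hYZ : TreeLe (lb.get (f i)) Z := by simpa using hg (f i)
  exact hXY.unfold.relComp_of_root_ne_union hYZ.unfold hX hY hZ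

lemma TreeLe.trans {A B C : ITree} (hAB : TreeLe A B) (hBC : TreeLe B C) : TreeLe A C :=
  ⟨Relation.Comp TreeLe TreeLe, fun _ _ => leF_relComp_treeLe, B, hAB, hBC⟩

/-- coinductive tree subtyping ≤_T is a preorder (reflexive and transitive)
on well-formed infinite types. -/
theorem stmt7 :
    (∀ A : ITree, A.Wf → TreeLe A A) ∧
    (∀ A B C : ITree, A.Wf → B.Wf → C.Wf → TreeLe A B → TreeLe B C → TreeLe A C) :=
  ⟨fun _ hA => TreeLe.refl hA, fun _ _ _ _ _ _ => TreeLe.trans⟩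

end CAP
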